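/- Consider the layered Hamiltonian H_δ(σ) = −Σ_{k=1}^{L} δ^{k−1} ⟨σ^{(k)}, b^{(k)} + W^{(k)}σ^{(k−1)}⟩ on states σ = (σ^{(0)},…,σ^{(L)}) with σ^{(k)} ∈ {−1,1}^{M_k}, and fix σ^{(0)}. Define the forward pass σ*^{(k)} = sign(W^{(k)}σ*^{(k−1)} + b^{(k)}) with σ*^{(0)} = σ^{(0)}, and assume no preactivation coordinate (W^{(k)}σ*^{(k−1)} + b^{(k)})_j is zero. Let K₁ = min_{k,j} |(b^{(k)} + W^{(k)}σ*^{(k−1)})_j| > 0 and K₀ = max_{k, v ∈ {−1,1}^{M_{k−1}}} ‖b^{(k)} + W^{(k)}v‖₁. Then for every 0 < δ ≤ K₁/(K₀ + K₁), the state (σ*^{(1)},…,σ*^{(L)}) is the unique minimizer of H_δ(σ^{(0)}, ·) over all (σ^{(1)},…,σ^{(L)}) ∈ ∏_k {−1,1}^{M_k}. -/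

import Mathlib

/-!
Let `τ` agree with the forward pass `σ*` up to layer `m` and differ from it at layer `m + 1`.
Each layer `σ*^{(k+1)}` is the sign of its preactivation `x_k`, so it contributes the maximal
value `‖x_k‖₁`. At layer `m + 1` the competitor flips some coordinate `i₀` and loses
`2 |x_m i₀| ≥ 2 K₁`, weighted by `δ ^ m`; at each later layer it gains at most `K₀`, weighted by
`δ ^ k`. The condition `δ (K₀ + K₁) ≤ K₁` makes the geometric tail `K₀ ∑_{k > m} δ ^ k` at most
`K₁ δ ^ m`, which is strictly less than the loss.
-/

open Finset Matrix

lemma Real.sign_mul_self (x : ℝ) : Real.sign x * x = |x| := by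
  rcases lt_trichotomy x 0 with h | rfl | h
  · rw [Real.sign_of_neg h, abs_of_neg h, neg_one_mul]
  · simp
  · rw [Real.sign_of_pos h, abs_of_pos h, one_mul]

lemma mul_eq_neg_abs_of_ne_sign {ε x : ℝ} (hε : ε = 1 ∨ ε = -1) (hx : x ≠ 0)
    (hne : ε ≠ Real.sign x) : ε * x = -|x| := by
  rcases hx.lt_or_gt with h | h
  · rw [Real.sign_of_neg h] at hne
    rw [abs_of_neg h, hε.resolve_right hne, one_mul, neg_neg]
  · rw [Real.sign_of_pos h] at hne
    rw [abs_of_pos h, hε.resolve_left hne, neg_one_mul]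

lemma mul_le_abs_of_abs_le_one {ε : ℝ} (hε : |ε| ≤ 1) (x : ℝ) : ε * x ≤ |x| := calc
  ε * x ≤ |ε| * |x| := by rw [← abs_mul]; exact le_abs_self _
  _ ≤ |x| := mul_le_of_le_one_left (abs_nonneg x) hε

lemma abs_le_one_of_eq_one_or_eq_neg_one {ε : ℝ} (hε : ε = 1 ∨ ε = -1) : |ε| ≤ 1 := by
  rcases hε with rfl | rfl <;> simp

section Alignment

variable {ι : Type*} [Fintype ι]

lemma sign_dotProduct_self (x : ι → ℝ) : (fun i => Real.sign (x i)) ⬝ᵥ x = ∑ i, |x i| :=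
  sum_congr rfl fun i _ => Real.sign_mul_self (x i)

lemma dotProduct_le_sum_abs {ε x : ι → ℝ} (hε : ∀ i, |ε i| ≤ 1) : ε ⬝ᵥ x ≤ ∑ i, |x i| :=
  sum_le_sum fun i _ => mul_le_abs_of_abs_le_one (hε i) (x i)

lemma dotProduct_add_two_mul_abs_le_sum_abs {ε x : ι → ℝ} (hε : ∀ i, |ε i| ≤ 1) {i₀ : ι}
    (hi₀ : ε i₀ * x i₀ = -|x i₀|) : ε ⬝ᵥ x + 2 * |x i₀| ≤ ∑ i, |x i| := by
  have hdefect : 2 * |x i₀| ≤ ∑ i, (|x i| - ε i * x i) := calc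
    2 * |x i₀| = |x i₀| - ε i₀ * x i₀ := by rw [hi₀]; ring
    _ ≤ _ := single_le_sum (fun i _ => sub_nonneg.mpr (mul_le_abs_of_abs_le_one (hε i) (x i)))
      (mem_univ i₀)
  rw [sum_sub_distrib] at hdefect
  rw [dotProduct]
  linarith

lemma dotProduct_le_sign_dotProduct_add {ε y x : ι → ℝ} {K₀ : ℝ} (hε : ∀ i, |ε i| ≤ 1)
    (hy : ∑ i, |y i| ≤ K₀) : ε ⬝ᵥ y ≤ (fun i => Real.sign (x i)) ⬝ᵥ x + K₀ := by
  rw [sign_dotProduct_self]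
  linarith [dotProduct_le_sum_abs (x := y) hε, sum_nonneg fun i (_ : i ∈ univ) => abs_nonneg (x i)]

lemma dotProduct_add_two_mul_le_sign_dotProduct_of_ne {ε x : ι → ℝ} {K : ℝ}
    (hε : ∀ i, ε i = 1 ∨ ε i = -1) (hK : 0 < K) (hx : ∀ i, K ≤ |x i|)
    (hne : ε ≠ fun i => Real.sign (x i)) : ε ⬝ᵥ x + 2 * K ≤ (fun i => Real.sign (x i)) ⬝ᵥ x := by
  obtain ⟨i₀, hi₀⟩ := Function.ne_iff.mp hne
  have hflip : ε i₀ * x i₀ = -|x i₀| :=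
    mul_eq_neg_abs_of_ne_sign (hε i₀) (abs_pos.mp (hK.trans_le (hx i₀))) hi₀
  rw [sign_dotProduct_self]
  linarith [dotProduct_add_two_mul_abs_le_sum_abs
    (fun i => abs_le_one_of_eq_one_or_eq_neg_one (hε i)) hflip, hx i₀]

end Alignment

lemma mul_add_le_of_le_div {δ K₀ K₁ : ℝ} (hδ : 0 < δ) (hK₁ : 0 ≤ K₁)
    (h : δ ≤ K₁ / (K₀ + K₁)) : δ * (K₀ + K₁) ≤ K₁ := by
  have hden : 0 < K₀ + K₁ := by
    by_contra! hden
    exact (hδ.trans_le h).not_ge (div_nonpos_of_nonneg_of_nonpos hK₁ hden)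
  exact (le_div_iff₀ hden).mp h

lemma mul_geom_sum_Ico_le {δ K₀ K₁ : ℝ} (hδ : 0 < δ) (hK₁ : 0 ≤ K₁) (hδK : δ * (K₀ + K₁) ≤ K₁)
    {m L : ℕ} (hmL : m < L) : K₀ * ∑ k ∈ Ico (m + 1) L, δ ^ k ≤ K₁ * δ ^ m := by
  set S := ∑ k ∈ Ico (m + 1) L, δ ^ k
  have hS : 0 ≤ S := sum_nonneg fun k _ => by positivity
  have hgeom : S * (1 - δ) = δ ^ (m + 1) - δ ^ L := geom_sum_Ico_mul_neg δ hmL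
  have : δ * (K₀ * S) ≤ δ * (K₁ * δ ^ m) := by
    nlinarith [mul_le_mul_of_nonneg_right hδK hS, mul_nonneg hK₁ (pow_nonneg hδ.le L), pow_succ δ m]
  exact le_of_mul_le_mul_left this hδ

theorem sum_pow_mul_lt_of_first_gap {δ K₀ K₁ : ℝ} (hδ : 0 < δ) (hK₁ : 0 < K₁)
    (hδK : δ * (K₀ + K₁) ≤ K₁) {e e' : ℕ → ℝ} {m L : ℕ} (hmL : m < L)
    (hlow : ∀ k < m, e' k = e k) (hgap : e' m + 2 * K₁ ≤ e m)
    (htail : ∀ k ∈ Ico (m + 1) L, e' k ≤ e k + K₀) :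
    ∑ k ∈ range L, δ ^ k * e' k < ∑ k ∈ range L, δ ^ k * e k := by
  have hsplit : ∀ f : ℕ → ℝ, ∑ k ∈ range L, δ ^ k * f k =
      ∑ k ∈ range m, δ ^ k * f k + δ ^ m * f m + ∑ k ∈ Ico (m + 1) L, δ ^ k * f k := fun f => by
    rw [← sum_range_add_sum_Ico _ hmL, sum_range_succ]
  have hhead : ∑ k ∈ range m, δ ^ k * e' k = ∑ k ∈ range m, δ ^ k * e k :=
    sum_congr rfl fun k hk => by rw [hlow k (mem_range.mp hk)]
  have hrest : ∑ k ∈ Ico (m + 1) L, δ ^ k * e' k ≤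
      ∑ k ∈ Ico (m + 1) L, δ ^ k * e k + K₀ * ∑ k ∈ Ico (m + 1) L, δ ^ k := by
    rw [mul_sum, ← sum_add_distrib]
    exact sum_le_sum fun k hk => by
      linear_combination mul_le_mul_of_nonneg_left (htail k hk) (pow_nonneg hδ.le k)
  have hpow : 0 < δ ^ m := pow_pos hδ m
  rw [hsplit, hsplit, hhead]
  linear_combination mul_le_mul_of_nonneg_left hgap hpow.le + hrest +
    mul_geom_sum_Ico_le hδ hK₁.le hδK hmL + mul_pos hK₁ hpow

lemma exists_first_ne {β : ℕ → Type*} {f g : ∀ k, β k} (h0 : f 0 = g 0) :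
    ∀ {L : ℕ}, (∃ k ≤ L, f k ≠ g k) → ∃ m < L, (∀ k ≤ m, f k = g k) ∧ f (m + 1) ≠ g (m + 1)
  | 0, ⟨k, hk, hne⟩ => (hne (by rwa [Nat.le_zero.mp hk])).elim
  | L + 1, ⟨k, hk, hne⟩ => by
    by_cases h : ∃ k ≤ L, f k ≠ g k
    · obtain ⟨m, hm, hm'⟩ := exists_first_ne h0 h
      exact ⟨m, by omega, hm'⟩
    · push Not at h
      obtain rfl : k = L + 1 := by
        by_contra hk'
        exact hne (h k (by omega))
      exact ⟨L, by omega, h, hne⟩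

theorem forward_pass_is_unique_ground_state_general
    (L : ℕ) (M : ℕ → ℕ)
    (W : (k : ℕ) → Matrix (Fin (M (k + 1))) (Fin (M k)) ℝ)
    (b : (k : ℕ) → Fin (M (k + 1)) → ℝ)
    (σstar : (k : ℕ) → Fin (M k) → ℝ)
    (hfwd : ∀ k < L, ∀ i,
      σstar (k + 1) i = Real.sign (b k i + ∑ j, W k i j * σstar k j))
    (K₁ : ℝ) (hK₁pos : 0 < K₁)
    (hK₁ : ∀ k < L, ∀ i, K₁ ≤ |b k i + ∑ j, W k i j * σstar k j|)
    (K₀ : ℝ)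
    (hK₀ : ∀ k < L, ∀ v : Fin (M k) → ℝ, (∀ j, v j = 1 ∨ v j = -1) →
      (∑ i, |b k i + ∑ j, W k i j * v j|) ≤ K₀)
    (δ : ℝ) (hδ0 : 0 < δ) (hδ : δ ≤ K₁ / (K₀ + K₁))
    (H : ((k : ℕ) → Fin (M k) → ℝ) → ℝ)
    (hH : ∀ s, H s = -(∑ k ∈ Finset.range L,
      δ ^ k * ∑ i, s (k + 1) i * (b k i + ∑ j, W k i j * s k j))) :
    ∀ τ : (k : ℕ) → Fin (M k) → ℝ,
      (∀ k ≤ L, ∀ i, τ k i = 1 ∨ τ k i = -1) →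
      τ 0 = σstar 0 →
      ¬(∀ k ≤ L, τ k = σstar k) →
      H σstar < H τ := by
  intro τ hτ hτ0 hne
  push Not at hne
  obtain ⟨m, hmL, hlow, hm⟩ := exists_first_ne hτ0 hne
  have hH' : ∀ s, H s = -∑ k ∈ range L, δ ^ k * (s (k + 1) ⬝ᵥ (b k + W k *ᵥ s k)) := hH
  have hσ : ∀ k < L, σstar (k + 1) = fun i => Real.sign ((b k + W k *ᵥ σstar k) i) :=
    fun k hk => funext (hfwd k hk)
  rw [hH', hH', neg_lt_neg_iff]
  refine sum_pow_mul_lt_of_first_gap hδ0 hK₁pos (mul_add_le_of_le_div hδ0 hK₁pos.le hδ) hmL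
    (fun k hk => by rw [hlow k hk.le, hlow (k + 1) hk]) ?_ fun k hk => ?_
  · rw [hlow m le_rfl, hσ m hmL]
    exact dotProduct_add_two_mul_le_sign_dotProduct_of_ne (hτ _ hmL) hK₁pos (hK₁ m hmL)
      (hσ m hmL ▸ hm)
  · have hkL := (mem_Ico.mp hk).2
    rw [hσ k hkL]
    exact dotProduct_le_sign_dotProduct_add
      (fun i => abs_le_one_of_eq_one_or_eq_neg_one (hτ _ hkL i)) (hK₀ k hkL (τ k) (hτ k hkL.le))

theorem forward_pass_is_unique_ground_state
    (L : ℕ) (hL : 1 ≤ L) (M : ℕ → ℕ)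
    (W : (k : ℕ) → Matrix (Fin (M (k + 1))) (Fin (M k)) ℝ)
    (b : (k : ℕ) → Fin (M (k + 1)) → ℝ)
    (σstar : (k : ℕ) → Fin (M k) → ℝ)
    (hσ0 : ∀ i, σstar 0 i = 1 ∨ σstar 0 i = -1)
    (hpre : ∀ k < L, ∀ i, (b k i + ∑ j, W k i j * σstar k j) ≠ 0)
    (hfwd : ∀ k < L, ∀ i,
      σstar (k + 1) i = Real.sign (b k i + ∑ j, W k i j * σstar k j))
    (K₁ : ℝ) (hK₁pos : 0 < K₁)
    (hK₁ : ∀ k < L, ∀ i, K₁ ≤ |b k i + ∑ j, W k i j * σstar k j|)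
    (K₀ : ℝ)
    (hK₀ : ∀ k < L, ∀ v : Fin (M k) → ℝ, (∀ j, v j = 1 ∨ v j = -1) →
      (∑ i, |b k i + ∑ j, W k i j * v j|) ≤ K₀)
    (δ : ℝ) (hδ0 : 0 < δ) (hδ : δ ≤ K₁ / (K₀ + K₁))
    (H : ((k : ℕ) → Fin (M k) → ℝ) → ℝ)
    (hH : ∀ s, H s = -(∑ k ∈ Finset.range L,
      δ ^ k * ∑ i, s (k + 1) i * (b k i + ∑ j, W k i j * s k j))) :
    ∀ τ : (k : ℕ) → Fin (M k) → ℝ,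
      (∀ k ≤ L, ∀ i, τ k i = 1 ∨ τ k i = -1) →
      τ 0 = σstar 0 →
      ¬(∀ k ≤ L, τ k = σstar k) →
      H σstar < H τ :=
  forward_pass_is_unique_ground_state_general L M W b σstar hfwd K₁ hK₁pos hK₁ K₀ hK₀ δ hδ0 hδ H hH
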